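/- Assume b > (n−1)a > 0. If (λ,μ) and (λ',μ') are bipartitions of n with Z^N_{a,b}(λ,μ) ⊴ Z^N_{a,b}(λ',μ') (dominance of multisets, comparing decreasing rearrangements by partial sums), then λ ⊴ λ' in the dominance order for partitions of possibly different sizes (all partial sums of λ are at most those of λ'). -/

import Mathlib

/-- Partial sum of the first `d` parts of a partition (given as a function). -/
def psum (f : ℕ → ℕ) (d : ℕ) : ℕ := ∑ i ∈ Finset.range d, f i

/-- Dominance order between partitions of possibly different numbers. -/
def Dom (f g : ℕ → ℕ) : Prop := ∀ d, psum f d ≤ psum g d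

/-- Decreasing enumeration of a multiset of natural numbers. -/
def dsort (M : Multiset ℕ) : List ℕ := (M.sort (· ≤ ·)).reverse

/-- Dominance order on multisets of naturals (same size, same sum). -/
def MDom (M M' : Multiset ℕ) : Prop :=
  ∀ d, ((dsort M).take d).sum ≤ ((dsort M').take d).sum

/-- Lusztig's multiset `Z^N_{a,b}(λ,μ)` (with `b = r·a + b'`), 0-indexed. -/
def Zab (a b' r N : ℕ) (l m : ℕ → ℕ) : Multiset ℕ :=
  ((Finset.range (N + r)).val.map fun i => (l i + (N + r - 1 - i)) * a + b') +
  ((Finset.range N).val.map fun j => (m j + (N - 1 - j)) * a)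

/-!
If `λ_1, …, λ_d` are all positive, the `d` entries of `Z(λ, μ)` indexed by them sum to at most the
top-`d` partial sum of `Z(λ, μ)`, hence of `Z(λ', μ')`. Those top `d` entries of `Z(λ', μ')` are
`k` entries of its `λ'`-part and `σ` of its `μ'`-part, bounded by the `k` resp. `σ` largest ones.
If `σ > 0`, comparing the positional terms `N + r - 1 - i` and `N - 1 - j` gives
`(r + 1) a + b' ≤ n a`, contradicting `b > (n - 1) a`; so `σ = 0` and the inequality cancels down
to `∑_{i<d} λ_i ≤ ∑_{i<d} λ'_i`. Zero parts of `λ` do not change its partial sums.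
-/

theorem List.Sublist.sum_le_sum_take {α : Type*} [AddCommMonoid α] [PartialOrder α]
    [IsOrderedAddMonoid α] {l₁ l₂ : List α} (h : l₁.Sublist l₂) (hl₂ : l₂.SortedGE) :
    l₁.sum ≤ (l₂.take l₁.length).sum := by
  induction l₂ generalizing l₁ with
  | nil => simp [List.sublist_nil.mp h]
  | cons b t ih =>
    obtain ⟨hb, ht⟩ := List.pairwise_cons.mp hl₂.pairwise
    cases l₁ with
    | nil => simp
    | cons c l₁ =>
      obtain ⟨hcb, hl₁⟩ : c ≤ b ∧ l₁.Sublist t := by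
        rcases List.sublist_cons_iff.mp h with h | ⟨_, heq, h⟩
        · exact ⟨hb c (h.subset List.mem_cons_self), (List.sublist_cons_self c l₁).trans h⟩
        · obtain ⟨rfl, rfl⟩ := List.cons.inj heq
          exact ⟨le_rfl, h⟩
      simpa using add_le_add hcb (ih hl₁ ht.sortedGE)

theorem sortedGE_dsort (M : Multiset ℕ) : (dsort M).SortedGE := by
  simpa [dsort] using (M.pairwise_sort (· ≤ ·)).sortedLE

@[simp]
theorem coe_dsort (M : Multiset ℕ) : ((dsort M : List ℕ) : Multiset ℕ) = M := by
  simp [dsort]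

@[simp]
theorem length_dsort (M : Multiset ℕ) : (dsort M).length = Multiset.card M := by
  simp [dsort]

theorem sum_le_sum_take_dsort_of_le {S M : Multiset ℕ} (h : S ≤ M) :
    S.sum ≤ ((dsort M).take (Multiset.card S)).sum := by
  have hsub : (dsort S).Sublist (dsort M) :=
    List.sublist_of_subperm_of_sortedGE (Multiset.coe_le.mp (by simpa using h))
      (sortedGE_dsort S) (sortedGE_dsort M)
  simpa [← Multiset.sum_coe] using hsub.sum_le_sum_take (sortedGE_dsort M)

theorem exists_sum_take_dsort_add_le (A B : Multiset ℕ) {d : ℕ}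
    (hd : d ≤ Multiset.card A + Multiset.card B) :
    ∃ k σ, k + σ = d ∧ k ≤ Multiset.card A ∧ σ ≤ Multiset.card B ∧
      ((dsort (A + B)).take d).sum ≤ ((dsort A).take k).sum + ((dsort B).take σ).sum := by
  set S : Multiset ℕ := ↑((dsort (A + B)).take d)
  have hS : S ≤ A + B := by
    simpa using Multiset.coe_le.mpr ((List.take_sublist d (dsort (A + B))).subperm)
  refine ⟨Multiset.card (S - B), Multiset.card (S ∩ B), ?_,
    Multiset.card_le_card (Multiset.sub_le_iff_le_add.mpr hS),
    Multiset.card_le_card Multiset.inter_le_right, ?_⟩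
  · rw [← Multiset.card_add, Multiset.sub_add_inter]
    simp [S, hd]
  · calc ((dsort (A + B)).take d).sum = (S - B).sum + (S ∩ B).sum := by
          rw [← Multiset.sum_add, Multiset.sub_add_inter, Multiset.sum_coe]
      _ ≤ _ := add_le_add (sum_le_sum_take_dsort_of_le (Multiset.sub_le_iff_le_add.mpr hS))
          (sum_le_sum_take_dsort_of_le Multiset.inter_le_right)

theorem dsort_map_range_of_antitone {f : ℕ → ℕ} (hf : Antitone f) (t : ℕ) :
    dsort ((Finset.range t).val.map f) = (List.range t).map f := by
  have hsorted : ((List.range t).map f).SortedGE :=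
    (List.pairwise_map.mpr ((List.sortedLT_range t).pairwise.imp
      fun {i j} (h : i < j) => (hf h.le : f j ≤ f i))).sortedGE
  refine List.Perm.eq_of_sortedGE (sortedGE_dsort _) hsorted (Multiset.coe_eq_coe.mp ?_)
  simp [Multiset.range]

theorem sum_take_dsort_map_range_of_antitone {f : ℕ → ℕ} (hf : Antitone f) {k t : ℕ}
    (hk : k ≤ t) :
    ((dsort ((Finset.range t).val.map f)).take k).sum = ∑ i ∈ Finset.range k, f i := by
  rw [dsort_map_range_of_antitone hf, ← List.map_take, List.take_range, min_eq_left hk]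
  simp [Finset.sum_eq_multiset_sum, Multiset.range]

theorem psum_mono (f : ℕ → ℕ) : Monotone (psum f) := fun _ _ h =>
  Finset.sum_le_sum_of_subset (Finset.range_subset_range.mpr h)

theorem sum_range_add_mul (h p : ℕ → ℕ) (a t : ℕ) :
    ∑ i ∈ Finset.range t, (h i + p i) * a = (psum h t + ∑ i ∈ Finset.range t, p i) * a := by
  rw [← Finset.sum_mul, Finset.sum_add_distrib, psum]

theorem sum_range_add_mul_add (h p : ℕ → ℕ) (a c t : ℕ) :
    ∑ i ∈ Finset.range t, ((h i + p i) * a + c) =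
      (psum h t + ∑ i ∈ Finset.range t, p i) * a + t * c := by
  simp [Finset.sum_add_distrib, sum_range_add_mul]

theorem psum_le_psum_of_sum_range_le {l l' p : ℕ → ℕ} {a c d : ℕ} (ha : 0 < a)
    (h : ∑ i ∈ Finset.range d, ((l i + p i) * a + c) ≤
      ∑ i ∈ Finset.range d, ((l' i + p i) * a + c)) :
    psum l d ≤ psum l' d := by
  rw [sum_range_add_mul_add, sum_range_add_mul_add] at h
  have := Nat.le_of_mul_le_mul_right (Nat.le_of_add_le_add_right h) ha
  omega

theorem sum_range_sub_add_eq {N r k σ : ℕ} (hk : k ≤ r) (hσ : σ ≤ N) :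
    ∑ i ∈ Finset.range (k + σ), (N + r - 1 - i) =
      ∑ i ∈ Finset.range k, (N + r - 1 - i) +
        (∑ j ∈ Finset.range σ, (N - 1 - j) + σ * (r - k)) := by
  have hshift : ∑ j ∈ Finset.range σ, (N + r - 1 - (k + j)) =
      ∑ j ∈ Finset.range σ, ((N - 1 - j) + (r - k)) :=
    Finset.sum_congr rfl fun j hj => by
      have := Finset.mem_range.mp hj
      omega
  rw [Finset.sum_range_add, hshift, Finset.sum_add_distrib, Finset.sum_const, Finset.card_range,
    smul_eq_mul]

section Zab

variable {a b' r N : ℕ}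

theorem sum_range_le_sum_take_dsort_Zab (l m : ℕ → ℕ) {d : ℕ} (hd : d ≤ N + r) :
    ∑ i ∈ Finset.range d, ((l i + (N + r - 1 - i)) * a + b') ≤
      ((dsort (Zab a b' r N l m)).take d).sum := by
  have hle : (Finset.range d).val.map (fun i => (l i + (N + r - 1 - i)) * a + b') ≤
      Zab a b' r N l m :=
    (Multiset.map_le_map (Finset.val_le_iff.mpr (Finset.range_subset_range.mpr hd))).trans
      (Multiset.le_add_right _ _)
  simpa [Finset.sum_eq_multiset_sum] using sum_le_sum_take_dsort_of_le hle

theorem exists_sum_take_dsort_Zab_le {l m : ℕ → ℕ} (hl : Antitone l) (hm : Antitone m) {d : ℕ}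
    (hd : d ≤ N + r + N) :
    ∃ k σ, k + σ = d ∧ k ≤ N + r ∧ σ ≤ N ∧
      ((dsort (Zab a b' r N l m)).take d).sum ≤
        ∑ i ∈ Finset.range k, ((l i + (N + r - 1 - i)) * a + b') +
          ∑ j ∈ Finset.range σ, (m j + (N - 1 - j)) * a := by
  have hf : Antitone fun i => (l i + (N + r - 1 - i)) * a + b' := fun i j hij => by
    dsimp only
    gcongr
    exact hl hij
  have hg : Antitone fun j => (m j + (N - 1 - j)) * a := fun i j hij => by
    dsimp only
    gcongr
    exact hm hij
  obtain ⟨k, σ, hkσ, hk, hσ, hsum⟩ := exists_sum_take_dsort_add_le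
    ((Finset.range (N + r)).val.map fun i => (l i + (N + r - 1 - i)) * a + b')
    ((Finset.range N).val.map fun j => (m j + (N - 1 - j)) * a) (d := d) (by simpa using hd)
  rw [Multiset.card_map, Finset.card_val, Finset.card_range] at hk hσ
  refine ⟨k, σ, hkσ, hk, hσ, ?_⟩
  rwa [sum_take_dsort_map_range_of_antitone hf hk, sum_take_dsort_map_range_of_antitone hg hσ]
    at hsum

theorem sum_range_add_sum_range_lt {l l' m' : ℕ → ℕ} {n k σ : ℕ} (hσ : 0 < σ) (hσN : σ ≤ N)
    (hkr : k ≤ r) (hl : k + σ ≤ psum l (k + σ)) (hn : psum l' k + psum m' σ ≤ n)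
    (hna : n * a < (r + 1) * a + b') :
    ∑ i ∈ Finset.range k, ((l' i + (N + r - 1 - i)) * a + b') +
        ∑ j ∈ Finset.range σ, (m' j + (N - 1 - j)) * a <
      ∑ i ∈ Finset.range (k + σ), ((l i + (N + r - 1 - i)) * a + b') := by
  rw [sum_range_add_mul_add, sum_range_add_mul_add, sum_range_add_mul,
    sum_range_sub_add_eq hkr hσN]
  obtain ⟨u, rfl⟩ := Nat.exists_eq_add_of_le hkr
  rw [Nat.add_sub_cancel_left]
  have hu : u + 1 ≤ σ * (u + 1) := Nat.le_mul_of_pos_left _ hσ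
  have hb' : b' ≤ σ * b' := Nat.le_mul_of_pos_left _ hσ
  nlinarith [Nat.mul_le_mul_right a hu, Nat.mul_le_mul_right a hl, Nat.mul_le_mul_right a hn]

theorem psum_le_psum_of_pos {n : ℕ} (hab : (n - 1) * a < r * a + b') (hb'a : b' < a)
    {l m l' m' : ℕ → ℕ} (hl' : Antitone l') (hm' : Antitone m') (hn : psum l (N + r) ≤ n)
    (hn' : psum l' (N + r) + psum m' N ≤ n) (hdom : MDom (Zab a b' r N l m) (Zab a b' r N l' m'))
    {d : ℕ} (hdN : d ≤ N + r) (hld : ∀ i < d, 0 < l i) :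
    psum l d ≤ psum l' d := by
  have ha : 0 < a := by omega
  have hdl : d ≤ psum l d := by
    simpa [psum] using Finset.sum_le_sum (f := fun _ => 1) (g := l) (s := Finset.range d)
      fun i hi => hld i (Finset.mem_range.mp hi)
  have hln : psum l d ≤ n := by
    have := psum_mono l hdN
    omega
  have hna : n * a < (r + 1) * a + b' := by
    rcases n with _ | n
    · simp only [zero_mul]
      positivity
    · simp only [add_tsub_cancel_right] at hab
      nlinarith
  obtain ⟨k, σ, rfl, hk, hσ, htop⟩ :=
    exists_sum_take_dsort_Zab_le (a := a) (b' := b') (r := r) (N := N) hl' hm' (d := d)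
      (by omega)
  have hchain := (sum_range_le_sum_take_dsort_Zab l m hdN).trans ((hdom _).trans htop)
  rcases Nat.eq_zero_or_pos σ with rfl | hσ0
  · simpa using psum_le_psum_of_sum_range_le ha (by simpa using hchain)
  · have hkr : k ≤ r := by
      have : n < r + 2 := Nat.lt_of_mul_lt_mul_right (a := a) (by nlinarith)
      omega
    have hP' : psum l' k + psum m' σ ≤ n := by
      have := psum_mono l' hk
      have := psum_mono m' hσ
      omega
    exact absurd hchain (sum_range_add_sum_range_lt hσ0 hσ hkr hdl hP' hna).not_ge

end Zab

theorem asymptotic_symbol_dominance_implies_first_component_general (n a b r b' N : ℕ)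
    (hab : (n - 1) * a < b)
    (hbr : b = r * a + b') (hb'a : b' < a)
    (l m l' m' : ℕ → ℕ)
    (hl : Antitone l) (hl' : Antitone l') (hm' : Antitone m')
    (hlN : ∀ i, N + r ≤ i → l i = 0)
    (hn : psum l (N + r) + psum m N = n)
    (hn' : psum l' (N + r) + psum m' N = n)
    (hdom : MDom (Zab a b' r N l m) (Zab a b' r N l' m')) :
    Dom l l' := by
  intro d
  induction d with
  | zero => simp [psum]
  | succ e ih =>
    by_cases he : l e = 0
    · calc psum l (e + 1) = psum l e := by simp [psum, Finset.sum_range_succ, he]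
        _ ≤ psum l' e := ih
        _ ≤ psum l' (e + 1) := psum_mono l' e.le_succ
    · have heN : e < N + r := by
        by_contra h
        exact he (hlN e (by omega))
      exact psum_le_psum_of_pos (hbr ▸ hab) hb'a hl' hm' (hn ▸ Nat.le_add_right _ _) hn'.le hdom
        heN fun i hi => (Nat.pos_of_ne_zero he).trans_le (hl (by omega))

theorem asymptotic_symbol_dominance_implies_first_component (n a b r b' N : ℕ)
    (hna : 0 < (n - 1) * a) (hab : (n - 1) * a < b)
    (hbr : b = r * a + b') (hb'a : b' < a)
    (l m l' m' : ℕ → ℕ)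
    (hl : Antitone l) (hm : Antitone m) (hl' : Antitone l') (hm' : Antitone m')
    (hlN : ∀ i, N + r ≤ i → l i = 0) (hmN : ∀ j, N ≤ j → m j = 0)
    (hl'N : ∀ i, N + r ≤ i → l' i = 0) (hm'N : ∀ j, N ≤ j → m' j = 0)
    (hn : psum l (N + r) + psum m N = n)
    (hn' : psum l' (N + r) + psum m' N = n)
    (hdom : MDom (Zab a b' r N l m) (Zab a b' r N l' m')) :
    Dom l l' :=
  asymptotic_symbol_dominance_implies_first_component_general n a b r b' N hab hbr hb'a l m l' m' hl
    hl' hm' hlN hn hn' hdom
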